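/- arXiv:0709.2466 — 3 statements merged into one kernel-verified Lean document; each statement's English description precedes it below -/
import Mathlib

section
/- Let m₁ ≥ m₂ ≥ ⋯ ≥ m_k be positive integers, let s = m₁, and for 1 ≤ i ≤ s let r_i be the number of indices j with m_j ≥ i. Then the matrices A = J_{m₁}(0) ⊕ ⋯ ⊕ J_{m_k}(0) and B (the block matrix with zero diagonal blocks of sizes r₁,…,r_s, superdiagonal blocks G_{i,i+1} = [I_{r_{i+1}}; 0] of size r_i×r_{i+1}, and all other blocks zero) are permutation similar: there is a permutation matrix P with B = Pᵀ A P. -/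
open Matrix
open scoped Quaternion

noncomputable section

/-- A quaternion matrix `U` is unitary if `Uᴴ * U = 1`. -/
def IsUnitaryM {m : Type*} [Fintype m] [DecidableEq m] (U : Matrix m m ℍ[ℝ]) : Prop :=
  Uᴴ * U = 1

/-- `A` and `B` are unitarily similar if `A = Uᴴ * B * U` for some unitary `U`. -/
def UnitarilySimilar {m : Type*} [Fintype m] [DecidableEq m] (A B : Matrix m m ℍ[ℝ]) : Prop :=
  ∃ U : Matrix m m ℍ[ℝ], IsUnitaryM U ∧ A = Uᴴ * B * U

/-- The direct sum of nilpotent Jordan blocks `J_{m 0}(0) ⊕ ⋯ ⊕ J_{m (k-1)}(0)`,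
indexed by the sigma type `Σ t, Fin (m t)`: entry `((t,a),(u,b))` is `1` iff `t = u` and
`b = a + 1` (ones on the superdiagonal of each block). -/
def jordanNilpotent {k : ℕ} (m : Fin k → ℕ) :
    Matrix (Σ t : Fin k, Fin (m t)) (Σ t : Fin k, Fin (m t)) ℍ[ℝ] :=
  fun x y => if x.1 = y.1 ∧ (y.2 : ℕ) = (x.2 : ℕ) + 1 then 1 else 0

/-- The block matrix `B`: zero diagonal blocks of sizes `r 0, …, r (s-1)`, superdiagonal
blocks `G_{i,i+1} = [I_{r_{i+1}}; 0]` (identity on top, zeros below) of size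
`r_i × r_{i+1}`, and all other blocks zero.  Entry `((i,a),(j,b))` is `1` iff
`j = i + 1` and `a = b`. -/
def weyrMatrix {s : ℕ} (r : Fin s → ℕ) :
    Matrix (Σ i : Fin s, Fin (r i)) (Σ i : Fin s, Fin (r i)) ℍ[ℝ] :=
  fun x y => if (y.1 : ℕ) = (x.1 : ℕ) + 1 ∧ (x.2 : ℕ) = (y.2 : ℕ) then 1 else 0

open Finset

/-! Reading the Young diagram of `m` column by column instead of row by row: the box `(t, a)`
(row `t`, column `a`) of the Jordan basis becomes the box `(a, t)` of the Weyr basis, because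
`r` is the conjugate partition of `m`. Under this transposition a superdiagonal step
`(t, a) ↦ (t, a + 1)` inside one Jordan block is the step `(a, t) ↦ (a + 1, t)` between
consecutive Weyr blocks. -/

theorem Antitone.lt_card_filter_lt_iff {k : ℕ} {m : Fin k → ℕ} (hm : Antitone m) (i : ℕ)
    (j : Fin k) : (j : ℕ) < #{u | i < m u} ↔ i < m j := by
  constructor
  · intro hj
    by_contra! hij
    have hsub : ({u | i < m u} : Finset (Fin k)) ⊆ Iio j := fun u hu => by
      rw [mem_Iio]
      by_contra! hju
      exact ((mem_filter.1 hu).2.trans_le (hm hju)).not_ge hij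
    have := card_le_card hsub
    rw [Fin.card_Iio] at this
    omega
  · intro hij
    have hsub : Iic j ⊆ ({u | i < m u} : Finset (Fin k)) := fun u hu =>
      mem_filter.2 ⟨mem_univ u, hij.trans_le (hm (mem_Iic.1 hu))⟩
    have := card_le_card hsub
    rw [Fin.card_Iic] at this
    omega

section Conjugate

variable {s k : ℕ} {r : Fin s → ℕ} {m : Fin k → ℕ}
  (hconj : ∀ (i : Fin s) (j : Fin k), (j : ℕ) < r i ↔ (i : ℕ) < m j)
  (hr : ∀ i, r i ≤ k) (hm : ∀ j, m j ≤ s)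

def sigmaConjugateEquiv : (Σ i : Fin s, Fin (r i)) ≃ (Σ j : Fin k, Fin (m j)) where
  toFun x :=
    have hx : (x.2 : ℕ) < k := x.2.2.trans_le (hr x.1)
    ⟨⟨x.2, hx⟩, ⟨x.1, (hconj x.1 ⟨x.2, hx⟩).1 x.2.2⟩⟩
  invFun y :=
    have hy : (y.2 : ℕ) < s := y.2.2.trans_le (hm y.1)
    ⟨⟨y.2, hy⟩, ⟨y.1, (hconj ⟨y.2, hy⟩ y.1).2 y.2.2⟩⟩
  left_inv _ := rfl
  right_inv _ := rfl

theorem weyrMatrix_eq_submatrix_jordanNilpotent :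
    weyrMatrix r = (jordanNilpotent m).submatrix (sigmaConjugateEquiv hconj hr hm)
      (sigmaConjugateEquiv hconj hr hm) := by
  ext x y : 1
  simp only [weyrMatrix, jordanNilpotent, submatrix_apply, sigmaConjugateEquiv,
    Equiv.coe_fn_mk, Fin.ext_iff, and_comm]

end Conjugate

theorem jordan_permutation_similar_weyr_general (k : ℕ) (hk : 0 < k) (m : Fin k → ℕ)
    (hmono : ∀ t u : Fin k, t ≤ u → m u ≤ m t)
    (s : ℕ) (hs : s = m ⟨0, hk⟩) (r : Fin s → ℕ)
    (hr : ∀ i : Fin s, r i = (Finset.univ.filter fun j : Fin k => (i : ℕ) < m j).card) :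
    ∃ e : (Σ i : Fin s, Fin (r i)) ≃ (Σ t : Fin k, Fin (m t)),
      weyrMatrix r = (jordanNilpotent m).submatrix e e := by
  have hconj : ∀ (i : Fin s) (j : Fin k), (j : ℕ) < r i ↔ (i : ℕ) < m j := fun i j => by
    rw [hr i]
    exact Antitone.lt_card_filter_lt_iff hmono i j
  have hrk : ∀ i, r i ≤ k := fun i => by
    rw [hr i]
    exact (card_filter_le _ _).trans_eq (card_fin k)
  have hms : ∀ j, m j ≤ s := fun j => hs ▸ hmono _ _ (Fin.le_iff_val_le_val.2 (Nat.zero_le _))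
  exact ⟨_, weyrMatrix_eq_submatrix_jordanNilpotent hconj hrk hms⟩

/-- **Remark 2.1.** With the notation of Lemma 2.1, the matrices `A = ⊕ J_{m t}(0)` and `B`
(the Weyr-form block matrix) are in fact permutation similar: `B = Pᵀ A P`, i.e. `B` is
obtained from `A` by a simultaneous permutation of rows and columns. -/
theorem jordan_permutation_similar_weyr (k : ℕ) (hk : 0 < k) (m : Fin k → ℕ)
    (hpos : ∀ t, 0 < m t) (hmono : ∀ t u : Fin k, t ≤ u → m u ≤ m t)
    (s : ℕ) (hs : s = m ⟨0, hk⟩) (r : Fin s → ℕ)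
    (hr : ∀ i : Fin s, r i = (Finset.univ.filter fun j : Fin k => (i : ℕ) < m j).card) :
    ∃ e : (Σ i : Fin s, Fin (r i)) ≃ (Σ t : Fin k, Fin (m t)),
      weyrMatrix r = (jordanNilpotent m).submatrix e e :=
  jordan_permutation_similar_weyr_general k hk m hmono s hs r hr
end
end

section
/- For an n×n quaternion matrix M, define the 2n×2n matrices P = [[I_n, 0],[0, 0]] and Q_M = [[M, I_n − M],[M, I_n − M]]; note that P² = P = P* and Q_M² = Q_M for every M. Then for n×n quaternion matrices M and N, the pairs (P, Q_M) and (P, Q_N) are simultaneously unitarily similar (there exists a quaternion unitary V with V*PV = P and V*Q_M V = Q_N) if and only if M is unitarily similar to N. -/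
open Matrix
open scoped Quaternion

noncomputable section

/-- The projection `P = [[I, 0],[0, 0]]`. -/
def projP (n : ℕ) : Matrix (Fin n ⊕ Fin n) (Fin n ⊕ Fin n) ℍ[ℝ] :=
  Matrix.fromBlocks 1 0 0 0

/-- The idempotent `Q_M = [[M, I − M],[M, I − M]]`. -/
def QM {n : ℕ} (M : Matrix (Fin n) (Fin n) ℍ[ℝ]) :
    Matrix (Fin n ⊕ Fin n) (Fin n ⊕ Fin n) ℍ[ℝ] :=
  Matrix.fromBlocks M (1 - M) M (1 - M)

/-!
A unitary `V` with `Vᴴ P V = P` commutes with `P`, hence is block diagonal, `V = diag(A, D)`,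
with `A` and `D` unitary. Conjugating `Q_M` by `diag(A, D)` puts `Aᴴ M A` in the top-left corner,
so `N = Aᴴ M A`. Conversely `diag(W, W)` conjugates `Q_M` to `Q_{Wᴴ M W}` and fixes `P`.
Left inverses are right inverses throughout because quaternion matrix rings are Dedekind-finite.
-/

namespace Matrix

variable {R m n : Type*}

theorem eq_fromBlocks_diag_of_commute_fromBlocks_one [Semiring R] [Fintype m] [Fintype n]
    [DecidableEq m]
    {V : Matrix (m ⊕ n) (m ⊕ n) R} (h : Commute (fromBlocks 1 0 0 0) V) :
    V = fromBlocks V.toBlocks₁₁ 0 0 V.toBlocks₂₂ := by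
  rw [← fromBlocks_toBlocks V] at h
  simp only [Commute, SemiconjBy, fromBlocks_multiply, Matrix.one_mul, Matrix.mul_one,
    Matrix.zero_mul, Matrix.mul_zero, add_zero, fromBlocks_inj] at h
  rw [← fromBlocks_toBlocks V, ← h.2.1, h.2.2.1]
  simp

theorem fromBlocks_diag_conj_fromBlocks [Semiring R] [StarRing R] [Fintype m] [Fintype n]
    (A : Matrix m m R) (D : Matrix n n R) (W : Matrix m m R) (X : Matrix m n R)
    (Y : Matrix n m R) (Z : Matrix n n R) :
    (fromBlocks A 0 0 D)ᴴ * fromBlocks W X Y Z * fromBlocks A 0 0 D =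
      fromBlocks (Aᴴ * W * A) (Aᴴ * X * D) (Dᴴ * Y * A) (Dᴴ * Z * D) := by
  simp [fromBlocks_conjTranspose, fromBlocks_multiply, Matrix.mul_assoc]

end Matrix

section Unitary

variable {m : Type*} [Fintype m] [DecidableEq m]

theorem IsUnitaryM.mul_conjTranspose_self {U : Matrix m m ℍ[ℝ]} (hU : IsUnitaryM U) :
    U * Uᴴ = 1 :=
  mul_eq_one_comm.mp hU

theorem IsUnitaryM.conjTranspose {U : Matrix m m ℍ[ℝ]} (hU : IsUnitaryM U) :
    IsUnitaryM Uᴴ := by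
  rw [IsUnitaryM, conjTranspose_conjTranspose]
  exact hU.mul_conjTranspose_self

theorem IsUnitaryM.commute_of_conj_eq {V P : Matrix m m ℍ[ℝ]} (hV : IsUnitaryM V)
    (hP : Vᴴ * P * V = P) : Commute P V :=
  calc P * V = V * Vᴴ * (P * V) := by rw [hV.mul_conjTranspose_self, Matrix.one_mul]
    _ = V * (Vᴴ * P * V) := by simp only [Matrix.mul_assoc]
    _ = V * P := by rw [hP]

theorem isUnitaryM_fromBlocks_diag_iff {n : Type*} [Fintype n] [DecidableEq n]
    {A : Matrix m m ℍ[ℝ]} {D : Matrix n n ℍ[ℝ]} :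
    IsUnitaryM (fromBlocks A 0 0 D) ↔ IsUnitaryM A ∧ IsUnitaryM D := by
  simp [IsUnitaryM, fromBlocks_conjTranspose, fromBlocks_multiply, ← fromBlocks_one]

theorem UnitarilySimilar.symm {A B : Matrix m m ℍ[ℝ]} (h : UnitarilySimilar A B) :
    UnitarilySimilar B A := by
  obtain ⟨U, hU, rfl⟩ := h
  refine ⟨Uᴴ, hU.conjTranspose, ?_⟩
  simp only [conjTranspose_conjTranspose, ← Matrix.mul_assoc, hU.mul_conjTranspose_self,
    Matrix.one_mul]
  simp only [Matrix.mul_assoc, hU.mul_conjTranspose_self, Matrix.mul_one]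

end Unitary

section Gadget

variable {n : ℕ}

theorem projP_mul_self : projP n * projP n = projP n := by
  simp [projP, fromBlocks_multiply]

theorem projP_conjTranspose : (projP n)ᴴ = projP n := by
  simp [projP, fromBlocks_conjTranspose]

theorem QM_mul_self (M : Matrix (Fin n) (Fin n) ℍ[ℝ]) : QM M * QM M = QM M := by
  have h₁ : M * M + (1 - M) * M = M := by noncomm_ring
  have h₂ : M * (1 - M) + (1 - M) * (1 - M) = 1 - M := by noncomm_ring
  simp [QM, fromBlocks_multiply, h₁, h₂]

theorem fromBlocks_diag_conj_projP {A D : Matrix (Fin n) (Fin n) ℍ[ℝ]} (hA : IsUnitaryM A) :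
    (fromBlocks A 0 0 D)ᴴ * projP n * fromBlocks A 0 0 D = projP n := by
  rw [projP, fromBlocks_diag_conj_fromBlocks, Matrix.mul_one, hA]
  simp

theorem fromBlocks_diag_conj_QM {W : Matrix (Fin n) (Fin n) ℍ[ℝ]} (hW : IsUnitaryM W)
    (M : Matrix (Fin n) (Fin n) ℍ[ℝ]) :
    (fromBlocks W 0 0 W)ᴴ * QM M * fromBlocks W 0 0 W = QM (Wᴴ * M * W) := by
  have h : Wᴴ * (1 - M) * W = 1 - Wᴴ * M * W := by
    rw [Matrix.mul_sub, Matrix.sub_mul, Matrix.mul_one, hW]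
  rw [QM, fromBlocks_diag_conj_fromBlocks, h, QM]

end Gadget

/-- **Theorem 3.2(c), key gadget.** `P` is a self-adjoint idempotent and each `Q_M` is an
idempotent; the pairs `(P, Q_M)` and `(P, Q_N)` are simultaneously unitarily similar iff
`M` and `N` are unitarily similar. -/
theorem idempotent_pair_unitarily_similar_iff {n : ℕ}
    (M N : Matrix (Fin n) (Fin n) ℍ[ℝ]) :
    (projP n * projP n = projP n ∧ (projP n)ᴴ = projP n ∧
      ∀ K : Matrix (Fin n) (Fin n) ℍ[ℝ], QM K * QM K = QM K) ∧
    ((∃ V : Matrix (Fin n ⊕ Fin n) (Fin n ⊕ Fin n) ℍ[ℝ],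
        IsUnitaryM V ∧ Vᴴ * projP n * V = projP n ∧ Vᴴ * QM M * V = QM N) ↔
      UnitarilySimilar M N) := by
  refine ⟨⟨projP_mul_self, projP_conjTranspose, QM_mul_self⟩, ⟨?_, ?_⟩⟩
  · rintro ⟨V, hV, hP, hQ⟩
    have hPV : Commute (projP n) V := hV.commute_of_conj_eq hP
    have hV_diag := eq_fromBlocks_diag_of_commute_fromBlocks_one hPV
    rw [hV_diag] at hV hQ
    obtain ⟨hA, -⟩ := isUnitaryM_fromBlocks_diag_iff.mp hV
    rw [QM, fromBlocks_diag_conj_fromBlocks, QM, fromBlocks_inj] at hQ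
    exact UnitarilySimilar.symm ⟨_, hA, hQ.1.symm⟩
  · intro h
    obtain ⟨W, hW, rfl⟩ := h.symm
    exact ⟨fromBlocks W 0 0 W, isUnitaryM_fromBlocks_diag_iff.mpr ⟨hW, hW⟩,
      fromBlocks_diag_conj_projP hW, fromBlocks_diag_conj_QM hW M⟩
end
end

section
/- For an n×n quaternion matrix M, define the 2n×2n matrices E = [[0, I_n],[0, 0]] and F_M = [[0, M],[0, 0]]. Then for n×n quaternion matrices M and N, the pairs (E, F_M) and (E, F_N) are simultaneously unitarily similar (there exists a quaternion unitary V with V*EV = E and V*F_M V = F_N) if and only if M is unitarily similar to N. -/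
open Matrix
open scoped Quaternion

noncomputable section

/-- The matrix `E = [[0, I],[0, 0]]`. -/
def matE (n : ℕ) : Matrix (Fin n ⊕ Fin n) (Fin n ⊕ Fin n) ℍ[ℝ] :=
  Matrix.fromBlocks 0 1 0 0

/-- The matrix `F_M = [[0, M],[0, 0]]`. -/
def matFM {n : ℕ} (M : Matrix (Fin n) (Fin n) ℍ[ℝ]) :
    Matrix (Fin n ⊕ Fin n) (Fin n ⊕ Fin n) ℍ[ℝ] :=
  Matrix.fromBlocks 0 M 0 0

/-!
A unitary `V` with `Vᴴ E V = E` commutes with `E = [[0, I], [0, 0]]`, which forces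
`V = [[A, B], [0, A]]`. Since square quaternion matrices are Dedekind-finite, `Aᴴ A = 1`
makes `A` unitary and then `Aᴴ B = 0` forces `B = 0`. For such `V`, `Vᴴ F_M V = F_N`
says exactly `M A = A N`, i.e. `M = A N Aᴴ`; conversely `V = diag(A, A)` realises any such `A`.
-/

section Unitary

variable {R : Type*} [Monoid R] [StarMul R]

theorem mem_unitary_iff_star_mul_self [IsDedekindFiniteMonoid R] {U : R} :
    U ∈ unitary R ↔ star U * U = 1 :=
  Unitary.mem_iff.trans (and_iff_left_of_imp mul_eq_one_symm)

theorem star_mul_mul_eq_iff_mul_eq_mul {V X Y : R} (hV : V ∈ unitary R) :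
    star V * X * V = Y ↔ X * V = V * Y := by
  constructor
  · rintro rfl
    rw [← mul_assoc, ← mul_assoc, Unitary.mul_star_self_of_mem hV, one_mul]
  · intro h
    rw [mul_assoc, h, ← mul_assoc, Unitary.star_mul_self_of_mem hV, one_mul]

end Unitary

section Blocks

variable {m R : Type*} [Fintype m]

theorem commute_fromBlocks_zero_one_iff [DecidableEq m] [Semiring R]
    {V : Matrix (m ⊕ m) (m ⊕ m) R} :
    Commute (fromBlocks 0 1 0 0) V ↔ ∃ A B, V = fromBlocks A B 0 A := by
  constructor
  · intro h
    obtain ⟨A, B, C, D, rfl⟩ : ∃ A B C D, V = fromBlocks A B C D :=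
      ⟨_, _, _, _, (fromBlocks_toBlocks V).symm⟩
    simp only [Commute, SemiconjBy, fromBlocks_multiply, zero_mul, one_mul, zero_add, add_zero,
      mul_zero, mul_one, fromBlocks_inj, true_and] at h
    obtain ⟨rfl, rfl, -⟩ := h
    exact ⟨_, _, rfl⟩
  · rintro ⟨A, B, rfl⟩
    simp [Commute, SemiconjBy, fromBlocks_multiply]

theorem fromBlocks_zero_mul_eq_mul_fromBlocks_zero_iff [Semiring R] (M N A B : Matrix m m R) :
    fromBlocks 0 M 0 0 * fromBlocks A B 0 A = fromBlocks A B 0 A * fromBlocks 0 N 0 0 ↔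
      M * A = A * N := by
  simp [fromBlocks_multiply]

theorem fromBlocks_mem_unitary_iff [DecidableEq m] [Ring R] [StarRing R] [IsStablyFiniteRing R]
    {A B : Matrix m m R} :
    fromBlocks A B 0 A ∈ unitary (Matrix (m ⊕ m) (m ⊕ m) R) ↔
      A ∈ unitary (Matrix m m R) ∧ B = 0 := by
  simp only [mem_unitary_iff_star_mul_self, star_eq_conjTranspose, fromBlocks_conjTranspose,
    fromBlocks_multiply, ← fromBlocks_one, fromBlocks_inj, conjTranspose_zero, zero_mul, mul_zero,
    add_zero]
  constructor
  · rintro ⟨hA, hAB, -, -⟩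
    refine ⟨hA, ?_⟩
    calc B = A * Aᴴ * B := by rw [mul_eq_one_symm hA, one_mul]
      _ = 0 := by rw [mul_assoc, hAB, mul_zero]
  · rintro ⟨hA, rfl⟩
    simp [hA]

end Blocks

theorem isUnitaryM_iff_mem_unitary {m : Type*} [Fintype m] [DecidableEq m]
    {U : Matrix m m ℍ[ℝ]} : IsUnitaryM U ↔ U ∈ unitary (Matrix m m ℍ[ℝ]) :=
  mem_unitary_iff_star_mul_self.symm

theorem unitarilySimilar_iff_exists_mul_eq_mul {m : Type*} [Fintype m] [DecidableEq m]
    {M N : Matrix m m ℍ[ℝ]} :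
    UnitarilySimilar M N ↔ ∃ A ∈ unitary (Matrix m m ℍ[ℝ]), M * A = A * N := by
  simp only [UnitarilySimilar, isUnitaryM_iff_mem_unitary, ← star_eq_conjTranspose]
  constructor
  · rintro ⟨U, hU, rfl⟩
    refine ⟨star U, Unitary.star_mem hU, ?_⟩
    rw [mul_assoc, Unitary.mul_star_self_of_mem hU, mul_one]
  · rintro ⟨A, hA, h⟩
    refine ⟨star A, Unitary.star_mem hA, ?_⟩
    rw [star_star, ← h, mul_assoc, Unitary.mul_star_self_of_mem hA, mul_one]

/-- **Theorem 3.2(d), key gadget.** The pairs `(E, F_M)` and `(E, F_N)` are simultaneously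
unitarily similar iff `M` and `N` are unitarily similar. -/
theorem nilpotent_pair_unitarily_similar_iff {n : ℕ}
    (M N : Matrix (Fin n) (Fin n) ℍ[ℝ]) :
    (∃ V : Matrix (Fin n ⊕ Fin n) (Fin n ⊕ Fin n) ℍ[ℝ],
        IsUnitaryM V ∧ Vᴴ * matE n * V = matE n ∧ Vᴴ * matFM M * V = matFM N) ↔
      UnitarilySimilar M N := by
  simp only [isUnitaryM_iff_mem_unitary, unitarilySimilar_iff_exists_mul_eq_mul,
    ← star_eq_conjTranspose]
  constructor
  · rintro ⟨V, hV, hE, hF⟩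
    rw [star_mul_mul_eq_iff_mul_eq_mul hV] at hE hF
    obtain ⟨A, B, rfl⟩ := commute_fromBlocks_zero_one_iff.mp hE
    exact ⟨A, (fromBlocks_mem_unitary_iff.mp hV).1,
      (fromBlocks_zero_mul_eq_mul_fromBlocks_zero_iff M N A B).mp hF⟩
  · rintro ⟨A, hA, hMA⟩
    have hV := fromBlocks_mem_unitary_iff.mpr ⟨hA, rfl⟩
    refine ⟨fromBlocks A 0 0 A, hV, ?_, ?_⟩
    · exact (star_mul_mul_eq_iff_mul_eq_mul hV).mpr
        (commute_fromBlocks_zero_one_iff.mpr ⟨A, 0, rfl⟩)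
    · exact (star_mul_mul_eq_iff_mul_eq_mul hV).mpr
        ((fromBlocks_zero_mul_eq_mul_fromBlocks_zero_iff M N A 0).mpr hMA)
end
end
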